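/- arXiv:1901.09012 — 9 statements merged into one kernel-verified Lean document; each statement's English description precedes it below -/
import Mathlib

section
/- For all positive integers m, n, the maximal number of points on the discrete torus T_{m,n} with no three collinear satisfies τ_{m,n} ≤ 2·gcd(m,n). -/
/-- A line on the discrete torus `ZMod m × ZMod n`: the image of an integer line
`{A + k•(u,v) : k ∈ ℤ}` with `gcd(u,v) = 1`. -/
def torusLine (m n : ℕ) (L : Set (ZMod m × ZMod n)) : Prop :=
  ∃ (A : ZMod m × ZMod n) (u v : ℤ), Int.gcd u v = 1 ∧
    L = {P | ∃ k : ℤ, P = (A.1 + ((k * u : ℤ) : ZMod m), A.2 + ((k * v : ℤ) : ZMod n))}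

/-- Three points of the torus are collinear if some line contains all three. -/
def torusCollinear (m n : ℕ) (P Q R : ZMod m × ZMod n) : Prop :=
  ∃ L, torusLine m n L ∧ P ∈ L ∧ Q ∈ L ∧ R ∈ L

/-- No three (distinct) points of `S` lie on a common line. -/
def noThreeInLine (m n : ℕ) (S : Set (ZMod m × ZMod n)) : Prop :=
  ∀ P ∈ S, ∀ Q ∈ S, ∀ R ∈ S, P ≠ Q → P ≠ R → Q ≠ R → ¬ torusCollinear m n P Q R

/-- `tau m n`: maximal number of points on the torus with no three collinear. -/
noncomputable def tau (m n : ℕ) : ℕ :=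
  sSup {k | ∃ S : Finset (ZMod m × ZMod n), noThreeInLine m n ↑S ∧ S.card = k}


lemma crt_aux (m n : ℕ) (a b : ℤ) (h : (a : ZMod (Nat.gcd m n)) = (b : ZMod (Nat.gcd m n))) :
    ∃ k : ℤ, (k : ZMod m) = (a : ZMod m) ∧ (k : ZMod n) = (b : ZMod n) := by
  have hdvd : ((Nat.gcd m n : ℤ)) ∣ b - a :=
    ((ZMod.intCast_eq_intCast_iff _ _ _).mp h).dvd
  obtain ⟨c, hc⟩ := hdvd
  have hbez : (Nat.gcd m n : ℤ) = m * Int.gcdA m n + n * Int.gcdB m n := by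
    simpa using Int.gcd_eq_gcd_ab (m : ℤ) (n : ℤ)
  refine ⟨a + c * Int.gcdA m n * m, ?_, ?_⟩
  · rw [ZMod.intCast_eq_intCast_iff]
    exact Int.modEq_iff_dvd.mpr ⟨-(c * Int.gcdA m n), by ring⟩
  · rw [ZMod.intCast_eq_intCast_iff]
    refine Int.modEq_iff_dvd.mpr ⟨c * Int.gcdB m n, ?_⟩
    have h2 : b - a = c * ((m:ℤ) * Int.gcdA m n + n * Int.gcdB m n) := by
      rw [← hbez]; linarith
    linarith

/-- The "diagonal invariant" of a point of the torus: `a - b mod gcd(m,n)`. -/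
noncomputable def psiAux (m n : ℕ) (P : ZMod m × ZMod n) : ZMod (Nat.gcd m n) :=
  (((P.1.val : ℤ) - (P.2.val : ℤ)) : ZMod (Nat.gcd m n))

lemma mem_diag_aux (m n : ℕ) [NeZero m] [NeZero n] (P Q : ZMod m × ZMod n)
    (h : psiAux m n P = psiAux m n Q) :
    ∃ k : ℤ, Q = (P.1 + ((k * 1 : ℤ) : ZMod m), P.2 + ((k * 1 : ℤ) : ZMod n)) := by
  have h' : ((((Q.1.val : ℤ) - (P.1.val : ℤ) : ℤ)) : ZMod (Nat.gcd m n))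
      = ((((Q.2.val : ℤ) - (P.2.val : ℤ) : ℤ)) : ZMod (Nat.gcd m n)) := by
    unfold psiAux at h
    push_cast at h ⊢
    linear_combination -h
  obtain ⟨k, hk1, hk2⟩ := crt_aux m n ((Q.1.val : ℤ) - (P.1.val : ℤ))
    ((Q.2.val : ℤ) - (P.2.val : ℤ)) h'
  refine ⟨k, ?_⟩
  have e1 : ((k : ZMod m)) = Q.1 - P.1 := by
    rw [hk1]; push_cast; simp [ZMod.natCast_val, ZMod.cast_id]
  have e2 : ((k : ZMod n)) = Q.2 - P.2 := by
    rw [hk2]; push_cast; simp [ZMod.natCast_val, ZMod.cast_id]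
  ext
  · simp [e1]
  · simp [e2]

lemma collinear_of_psi_aux (m n : ℕ) [NeZero m] [NeZero n] (P Q R : ZMod m × ZMod n)
    (hQ : psiAux m n P = psiAux m n Q) (hR : psiAux m n P = psiAux m n R) :
    torusCollinear m n P Q R := by
  refine ⟨{X | ∃ k : ℤ, X = (P.1 + ((k * 1 : ℤ) : ZMod m), P.2 + ((k * 1 : ℤ) : ZMod n))},
    ⟨P, 1, 1, by norm_num, rfl⟩, ⟨0, by simp⟩, mem_diag_aux m n P Q hQ, mem_diag_aux m n P R hR⟩

theorem stmt1 (m n : ℕ) (hm : 0 < m) (hn : 0 < n) :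
    tau m n ≤ 2 * Nat.gcd m n := by
  haveI : NeZero m := ⟨hm.ne'⟩
  haveI : NeZero n := ⟨hn.ne'⟩
  have hd : 0 < Nat.gcd m n := Nat.gcd_pos_of_pos_left n hm
  haveI : NeZero (Nat.gcd m n) := ⟨hd.ne'⟩
  refine csSup_le ⟨0, ∅, by simp [noThreeInLine], by simp⟩ ?_
  rintro k ⟨S, hS, rfl⟩
  have hfib : ∀ a ∈ S.image (psiAux m n), (S.filter fun x => psiAux m n x = a).card ≤ 2 := by
    intro a _
    by_contra hcon
    push_neg at hcon
    obtain ⟨P, Q, R, hP, hQ, hR, hPQ, hPR, hQR⟩ := Finset.two_lt_card_iff.mp hcon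
    simp only [Finset.mem_filter] at hP hQ hR
    exact hS P hP.1 Q hQ.1 R hR.1 hPQ hPR hQR
      (collinear_of_psi_aux m n P Q R (hP.2.trans hQ.2.symm) (hP.2.trans hR.2.symm))
  calc S.card ≤ 2 * (S.image (psiAux m n)).card := Finset.card_le_mul_card_image S 2 hfib
    _ ≤ 2 * Fintype.card (ZMod (Nat.gcd m n)) := by
        gcongr
        exact Finset.card_le_univ _
    _ = 2 * Nat.gcd m n := by rw [ZMod.card]
end

section
/- For all positive integers m, n, x, y, we have τ_{m,n} ≤ τ_{xm,yn}, where τ denotes the maximal number of points on the corresponding discrete torus with no three collinear. -/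
section aux
variable (m n x y : ℕ)

/-- reduction map -/
def redF : ZMod (x * m) × ZMod (y * n) → ZMod m × ZMod n :=
  fun p => (ZMod.castHom (dvd_mul_left m x) (ZMod m) p.1,
            ZMod.castHom (dvd_mul_left n y) (ZMod n) p.2)

lemma redF_collinear {P Q R : ZMod (x*m) × ZMod (y*n)}
    (h : torusCollinear (x*m) (y*n) P Q R) :
    torusCollinear m n (redF m n x y P) (redF m n x y Q) (redF m n x y R) := by
  obtain ⟨L, ⟨A, u, v, hg, hL⟩, hP, hQ, hR⟩ := h
  subst hL
  refine ⟨_, ⟨redF m n x y A, u, v, hg, rfl⟩, ?_, ?_, ?_⟩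
  · obtain ⟨k, hk⟩ := hP
    exact ⟨k, by simp only [hk, redF, map_add, map_intCast]⟩
  · obtain ⟨k, hk⟩ := hQ
    exact ⟨k, by simp only [hk, redF, map_add, map_intCast]⟩
  · obtain ⟨k, hk⟩ := hR
    exact ⟨k, by simp only [hk, redF, map_add, map_intCast]⟩

end aux

theorem stmt2 (m n x y : ℕ) (hm : 0 < m) (hn : 0 < n) (hx : 0 < x) (hy : 0 < y) :
    tau m n ≤ tau (x * m) (y * n) := by
  haveI : NeZero m := ⟨hm.ne'⟩
  haveI : NeZero n := ⟨hn.ne'⟩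
  haveI : NeZero (x * m) := ⟨(Nat.mul_pos hx hm).ne'⟩
  haveI : NeZero (y * n) := ⟨(Nat.mul_pos hy hn).ne'⟩
  -- section of redF
  set g : ZMod m × ZMod n → ZMod (x*m) × ZMod (y*n) :=
    fun p => ((p.1.val : ZMod (x*m)), (p.2.val : ZMod (y*n))) with hg
  have hsec : ∀ p, redF m n x y (g p) = p := by
    intro p
    simp only [hg, redF]
    ext <;> simp [ZMod.natCast_val, ZMod.castHom_apply, ZMod.natCast_rightInverse p.1,
      ZMod.natCast_rightInverse p.2]
  have hginj : Function.Injective g := by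
    intro a b hab
    have := congrArg (redF m n x y) hab
    rwa [hsec, hsec] at this
  apply csSup_le_csSup
  · exact ⟨Fintype.card (ZMod (x*m) × ZMod (y*n)), fun k ⟨S, _, hc⟩ => hc ▸ S.card_le_univ⟩
  · exact ⟨0, ∅, by simp [noThreeInLine], rfl⟩
  · rintro k ⟨S, hS, hcard⟩
    refine ⟨S.image g, ?_, by rw [Finset.card_image_of_injective _ hginj, hcard]⟩
    rintro P hP Q hQ R hR hPQ hPR hQR hcol
    simp only [Finset.coe_image, Set.mem_image, Finset.mem_coe] at hP hQ hR
    obtain ⟨p, hp, rfl⟩ := hP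
    obtain ⟨q, hq, rfl⟩ := hQ
    obtain ⟨r, hr, rfl⟩ := hR
    have := redF_collinear m n x y hcol
    rw [hsec, hsec, hsec] at this
    exact hS p hp q hq r hr (fun h => hPQ (by rw [h])) (fun h => hPR (by rw [h]))
      (fun h => hQR (by rw [h])) this
end

section
/- Let m,n,x,y be positive integers, not both m=n=1, with gcd(x,y)=gcd(m,y)=gcd(n,x)=1. Then τ_{xm,yn} = τ_{m,n}. -/
/-!
Three points of `ℤ_M × ℤ_N` are collinear iff their differences from one of them lie in a
common cyclic subgroup, since every cyclic subgroup sits inside one generated by a primitive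
vector. If `gcd(n, x) = 1`, the reduction `π : ℤ_{xm} × ℤ_n → ℤ_m × ℤ_n` therefore preserves
collinearity, and it also reflects it: any `g` has a lift `h` with `(m, 0) ∈ ⟨h⟩` (choose the
first coordinate `a ≡ g₁ (mod m)` with `gcd(n a, x m) ∣ m`), so `π⁻¹⟨g⟩ ⊆ ⟨h⟩ + ker π = ⟨h⟩`.
Hence a no-three-in-line set with at least three points maps injectively onto a no-three-in-line
set, while `z ↦ (z₁.val, z₂)` embeds `ℤ_m × ℤ_n` back; so `τ_{xm,n} = τ_{m,n}`. Applying this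
to both coordinates, using the symmetry `τ_{M,N} = τ_{N,M}`, gives the theorem.
-/

open AddSubgroup

section Collinearity

variable {M N M' N' : ℕ}

lemma exists_gcd_eq_one_mem_zmultiples (g : ZMod M × ZMod N) :
    ∃ u v : ℤ, Int.gcd u v = 1 ∧ g ∈ zmultiples ((u : ZMod M), (v : ZMod N)) := by
  obtain ⟨a, ha⟩ := ZMod.intCast_surjective g.1
  obtain ⟨b, hb⟩ := ZMod.intCast_surjective g.2
  rcases (Int.gcd a b).eq_zero_or_pos with h0 | hpos
  · obtain ⟨rfl, rfl⟩ := Int.gcd_eq_zero_iff.mp h0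
    exact ⟨1, 0, by simp, 0, by ext <;> simp [← ha, ← hb]⟩
  · obtain ⟨d, u, v, -, huv, rfl, rfl⟩ := Int.exists_gcd_one' hpos
    exact ⟨u, v, huv, d, by ext <;> simp [← ha, ← hb, mul_comm]⟩

lemma mem_line_iff {A P : ZMod M × ZMod N} {u v : ℤ} :
    P ∈ {P : ZMod M × ZMod N | ∃ k : ℤ,
        P = (A.1 + ((k * u : ℤ) : ZMod M), A.2 + ((k * v : ℤ) : ZMod N))} ↔
      P - A ∈ zmultiples ((u : ZMod M), (v : ZMod N)) := by
  simp only [Set.mem_ofPred_eq, mem_zmultiples_iff, eq_sub_iff_add_eq, eq_comm (a := P)]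
  refine exists_congr fun k => ?_
  simp [Prod.ext_iff, add_comm]

theorem torusCollinear_iff {P Q R : ZMod M × ZMod N} :
    torusCollinear M N P Q R ↔ ∃ g, Q - P ∈ zmultiples g ∧ R - P ∈ zmultiples g := by
  constructor
  · rintro ⟨L, ⟨A, u, v, -, rfl⟩, hP, hQ, hR⟩
    rw [mem_line_iff] at hP hQ hR
    exact ⟨_, by simpa using sub_mem hQ hP, by simpa using sub_mem hR hP⟩
  · rintro ⟨g, hQ, hR⟩
    obtain ⟨u, v, huv, hg⟩ := exists_gcd_eq_one_mem_zmultiples g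
    have hle := zmultiples_le.mpr hg
    refine ⟨_, ⟨P, u, v, huv, rfl⟩, ?_, ?_, ?_⟩ <;> rw [mem_line_iff]
    exacts [by simp, hle hQ, hle hR]

theorem torusCollinear.map (f : ZMod M × ZMod N →+ ZMod M' × ZMod N') {P Q R : ZMod M × ZMod N}
    (h : torusCollinear M N P Q R) : torusCollinear M' N' (f P) (f Q) (f R) := by
  obtain ⟨g, hQ, hR⟩ := torusCollinear_iff.mp h
  refine torusCollinear_iff.mpr ⟨f g, ?_, ?_⟩ <;>
    rw [← map_sub, ← AddMonoidHom.map_zmultiples]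
  exacts [mem_map_of_mem f hQ, mem_map_of_mem f hR]

theorem torusCollinear_self_left (P R : ZMod M × ZMod N) : torusCollinear M N P P R :=
  torusCollinear_iff.mpr ⟨R - P, by simp, mem_zmultiples _⟩

end Collinearity

section Tau

variable {M N M' N' : ℕ}

lemma bddAbove_noThreeInLine_card [NeZero M] [NeZero N] :
    BddAbove {k | ∃ S : Finset (ZMod M × ZMod N), noThreeInLine M N ↑S ∧ S.card = k} :=
  ⟨Fintype.card (ZMod M × ZMod N), by rintro k ⟨S, -, rfl⟩; exact S.card_le_univ⟩

lemma card_le_tau [NeZero M] [NeZero N] {S : Finset (ZMod M × ZMod N)}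
    (hS : noThreeInLine M N ↑S) : S.card ≤ tau M N :=
  le_csSup bddAbove_noThreeInLine_card ⟨S, hS, rfl⟩

lemma tau_le {c : ℕ}
    (h : ∀ S : Finset (ZMod M × ZMod N), noThreeInLine M N ↑S → S.card ≤ c) : tau M N ≤ c :=
  csSup_le ⟨0, ∅, by simp [noThreeInLine], rfl⟩ (by rintro k ⟨S, hS, rfl⟩; exact h S hS)

lemma noThreeInLine_of_card_le_two {S : Finset (ZMod M × ZMod N)} (h : S.card ≤ 2) :
    noThreeInLine M N ↑S := by
  intro P hP Q hQ R hR hPQ hPR hQR _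
  have hsub : {P, Q, R} ⊆ S := by
    simp only [Finset.insert_subset_iff, Finset.singleton_subset_iff]
    exact ⟨hP, hQ, hR⟩
  have := Finset.card_le_card hsub
  rw [Finset.card_insert_of_notMem (by simp [hPQ, hPR]),
    Finset.card_pair hQR] at this
  omega

lemma two_le_tau [NeZero M] [NeZero N] (h : 1 < M * N) : 2 ≤ tau M N := by
  obtain ⟨P, Q, hPQ⟩ := Fintype.exists_pair_of_one_lt_card
    (by simpa [Fintype.card_prod, ZMod.card] : 1 < Fintype.card (ZMod M × ZMod N))
  simpa [Finset.card_pair hPQ] using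
    card_le_tau (noThreeInLine_of_card_le_two (Finset.card_pair hPQ).le)

section Reflects

variable {f : ZMod M × ZMod N → ZMod M' × ZMod N'}

lemma noThreeInLine.image
    (hf : ∀ P Q R, torusCollinear M' N' (f P) (f Q) (f R) → torusCollinear M N P Q R)
    {S : Finset (ZMod M × ZMod N)} (hS : noThreeInLine M N ↑S) :
    noThreeInLine M' N' ↑(S.image f) := by
  simp only [noThreeInLine, Finset.coe_image, Set.forall_mem_image]
  intro P hP Q hQ R hR hPQ hPR hQR hcol
  exact hS P hP Q hQ R hR (ne_of_apply_ne f hPQ) (ne_of_apply_ne f hPR) (ne_of_apply_ne f hQR)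
    (hf P Q R hcol)

lemma injOn_of_noThreeInLine
    (hf : ∀ P Q R, torusCollinear M' N' (f P) (f Q) (f R) → torusCollinear M N P Q R)
    {S : Finset (ZMod M × ZMod N)} (hS : noThreeInLine M N ↑S) (hcard : 2 < S.card) :
    Set.InjOn f ↑S := by
  intro P hP Q hQ hPQ
  by_contra hne
  obtain ⟨R, hR, hRPQ⟩ := Finset.exists_mem_notMem_of_card_lt_card
    ((Finset.card_le_two (a := P) (b := Q)).trans_lt hcard)
  obtain ⟨hRP, hRQ⟩ : R ≠ P ∧ R ≠ Q := by simpa using hRPQ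
  exact hS P hP Q hQ R hR hne hRP.symm hRQ.symm
    (hf P Q R (hPQ ▸ torusCollinear_self_left (f P) (f R)))

theorem tau_le_tau_of_reflects
    (hf : ∀ P Q R, torusCollinear M' N' (f P) (f Q) (f R) → torusCollinear M N P Q R)
    (h : 1 < M' * N') : tau M N ≤ tau M' N' := by
  have : NeZero M' := ⟨fun h0 => by simp [h0] at h⟩
  have : NeZero N' := ⟨fun h0 => by simp [h0] at h⟩
  refine tau_le fun S hS => ?_
  rcases le_or_gt S.card 2 with hcard | hcard
  · exact hcard.trans (two_le_tau h)
  · rw [← Finset.card_image_of_injOn (injOn_of_noThreeInLine hf hS hcard)]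
    exact card_le_tau (noThreeInLine.image hf hS)

end Reflects

theorem tau_comm (h : 1 < M * N) : tau M N = tau N M := by
  have reflects {M N : ℕ} (P Q R : ZMod M × ZMod N)
      (hcol : torusCollinear N M P.swap Q.swap R.swap) : torusCollinear M N P Q R := by
    simpa using hcol.map (AddEquiv.prodComm (M := ZMod N) (N := ZMod M)).toAddMonoidHom
  exact le_antisymm (tau_le_tau_of_reflects reflects (by rwa [mul_comm]))
    (tau_le_tau_of_reflects reflects h)

end Tau

lemma Nat.exists_modEq_gcd_mul_dvd (u : ℕ) {m x n : ℕ} (hm : 0 < m) (hx : 0 < x)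
    (hnx : n.Coprime x) : ∃ a : ℕ, a ≡ u [MOD m] ∧ Nat.gcd (n * a) (x * m) ∣ m := by
  obtain ⟨u', m', hcop, hu, hm'⟩ := Nat.exists_coprime u m
  set d := Nat.gcd u m
  have : NeZero (x * m') := ⟨Nat.mul_ne_zero hx.ne' (by rintro rfl; omega)⟩
  obtain ⟨w, hw⟩ := ZMod.unitsMap_surjective (dvd_mul_left m' x) (ZMod.unitOfCoprime u' hcop)
  set a' := (w : ZMod (x * m')).val
  have ha' : a' ≡ u' [MOD m'] := by
    rw [← ZMod.natCast_eq_natCast_iff, ZMod.natCast_val,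
      ← ZMod.unitsMap_val (dvd_mul_left m' x), hw]
    rfl
  have hgcd : Nat.gcd (n * a') (x * m') ∣ m' := by
    rw [Nat.Coprime.gcd_mul_right_cancel n (ZMod.val_coe_unit_coprime w)]
    exact Nat.Coprime.dvd_of_dvd_mul_left
      (Nat.Coprime.coprime_dvd_left (Nat.gcd_dvd_left _ _) hnx) (Nat.gcd_dvd_right _ _)
  refine ⟨a' * d, hu ▸ hm' ▸ ha'.mul_right' d, ?_⟩
  rw [hm', show n * (a' * d) = d * (n * a') by ring, show x * (m' * d) = d * (x * m') by ring,
    Nat.gcd_mul_left, mul_comm m']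
  exact mul_dvd_mul_left d hgcd

section Reduction

variable (x m n : ℕ)

def reduceFst : ZMod (x * m) × ZMod n →+ ZMod m × ZMod n :=
  (ZMod.castHom (dvd_mul_left m x) (ZMod m)).toAddMonoidHom.prodMap (AddMonoidHom.id _)

variable {x m n}

lemma reduceFst_apply (P : ZMod (x * m) × ZMod n) :
    reduceFst x m n P = (ZMod.cast P.1, P.2) := rfl

lemma reduceFst_natCast_val [NeZero m] (z : ZMod m × ZMod n) :
    reduceFst x m n ((z.1.val : ZMod (x * m)), z.2) = z := by
  rw [reduceFst_apply, ZMod.cast_natCast (dvd_mul_left m x), ZMod.natCast_zmod_val]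

lemma mem_zmultiples_of_reduceFst_eq_zero {X : ZMod (x * m) × ZMod n}
    (hX : reduceFst x m n X = 0) : X ∈ zmultiples ((m : ZMod (x * m)), (0 : ZMod n)) := by
  obtain ⟨c, hc⟩ := ZMod.intCast_surjective X.1
  have hX1 : (ZMod.cast X.1 : ZMod m) = 0 := congrArg Prod.fst hX
  have hX2 : X.2 = 0 := congrArg Prod.snd hX
  rw [← hc, ZMod.cast_intCast (dvd_mul_left m x),
    ZMod.intCast_zmod_eq_zero_iff_dvd] at hX1
  obtain ⟨j, rfl⟩ := hX1
  exact ⟨j, Prod.ext (by simp [← hc, mul_comm]) (by simpa using hX2.symm)⟩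

lemma exists_reduceFst_eq_and_mem_zmultiples (hm : 0 < m) (hx : 0 < x) (hnx : n.Coprime x)
    (g : ZMod m × ZMod n) :
    ∃ h, reduceFst x m n h = g ∧ ((m : ZMod (x * m)), (0 : ZMod n)) ∈ zmultiples h := by
  have : NeZero m := ⟨hm.ne'⟩
  obtain ⟨a, ha, hgcd⟩ := Nat.exists_modEq_gcd_mul_dvd g.1.val hm hx hnx
  obtain ⟨s, t, hst⟩ := Int.gcd_dvd_iff.mp (by exact_mod_cast hgcd :
    Int.gcd ((n * a : ℕ) : ℤ) ((x * m : ℕ) : ℤ) ∣ m)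
  refine ⟨((a : ZMod (x * m)), g.2), ?_, s * n, ?_⟩
  · rw [reduceFst_apply, ZMod.cast_natCast (dvd_mul_left m x),
      (ZMod.natCast_eq_natCast_iff _ _ _).mpr ha, ZMod.natCast_zmod_val]
  · have hcast := congrArg (Int.cast : ℤ → ZMod (x * m)) hst
    simp only [Int.cast_add, Int.cast_mul, Int.cast_natCast, ZMod.natCast_self, zero_mul,
      add_zero] at hcast
    ext
    · -- Bezout gives `m = (n a) s` in `ZMod (x m)`; the factor `n` kills the second coordinate.
      change (s * n) • (a : ZMod (x * m)) = m
      rw [zsmul_eq_mul, hcast]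
      push_cast
      ring
    · simp

theorem torusCollinear_of_reduceFst (hm : 0 < m) (hx : 0 < x) (hnx : n.Coprime x)
    {P Q R : ZMod (x * m) × ZMod n}
    (hcol : torusCollinear m n (reduceFst x m n P) (reduceFst x m n Q) (reduceFst x m n R)) :
    torusCollinear (x * m) n P Q R := by
  obtain ⟨g, hQ, hR⟩ := torusCollinear_iff.mp hcol
  obtain ⟨h, hhg, hker⟩ := exists_reduceFst_eq_and_mem_zmultiples hm hx hnx g
  have hlift : ∀ X, reduceFst x m n X ∈ zmultiples g → X ∈ zmultiples h := by
    rintro X ⟨k, hk⟩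
    have hX : X - k • h ∈ zmultiples ((m : ZMod (x * m)), (0 : ZMod n)) :=
      mem_zmultiples_of_reduceFst_eq_zero (by rw [map_sub, map_zsmul, hhg, ← hk, sub_self])
    simpa using add_mem (zmultiples_le.mpr hker hX) (zsmul_mem_zmultiples h k)
  refine torusCollinear_iff.mpr ⟨h, hlift _ ?_, hlift _ ?_⟩ <;> rwa [map_sub]

theorem tau_mul_left (hx : 0 < x) (hmn : 1 < m * n) (hnx : n.Coprime x) :
    tau (x * m) n = tau m n := by
  have hm : 0 < m := Nat.pos_of_ne_zero (by rintro rfl; simp at hmn)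
  have : NeZero m := ⟨hm.ne'⟩
  refine le_antisymm ?_ ?_
  · exact tau_le_tau_of_reflects (fun _ _ _ => torusCollinear_of_reduceFst hm hx hnx) hmn
  · refine tau_le_tau_of_reflects (f := fun z => ((z.1.val : ZMod (x * m)), z.2))
      (fun P Q R hcol => ?_) (by nlinarith)
    simpa only [reduceFst_natCast_val] using hcol.map (reduceFst x m n)

end Reduction

theorem stmt3 (m n x y : ℕ) (hm : 0 < m) (hn : 0 < n) (hx : 0 < x) (hy : 0 < y)
    (hmn : ¬ (m = 1 ∧ n = 1))
    (hxy : Nat.gcd x y = 1) (hmy : Nat.gcd m y = 1) (hnx : Nat.gcd n x = 1) :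
    tau (x * m) (y * n) = tau m n := by
  have hmn' : 1 < m * n := Nat.one_lt_mul_iff.mpr ⟨hm, hn, by omega⟩
  have hmyn : 1 < m * (y * n) := by nlinarith
  calc tau (x * m) (y * n)
      = tau m (y * n) := tau_mul_left hx hmyn (Nat.Coprime.mul_left (Nat.Coprime.symm hxy) hnx)
    _ = tau (y * n) m := tau_comm hmyn
    _ = tau n m := tau_mul_left hy (by rwa [mul_comm]) hmy
    _ = tau m n := tau_comm (by rwa [mul_comm])
end

section
/- Let m,n,x,y be positive integers with gcd(x,y)=gcd(m,y)=gcd(n,x)=1, and let f: T_{xm,yn} → T_{m,n} be the coordinatewise reduction map f(a₁,a₂)=(a₁ mod m, a₂ mod n). Then for every line ℓ on T_{m,n}, the preimage f⁻¹(ℓ) is a line on T_{xm,yn}. -/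
/-!
The preimage of the line `A + ℤ(u,v)` under the reduction is the coset `A' + H`, where `A'` lifts
`A` and `H` is generated by any lift `(U,V)` of `(u,v)` together with the kernel
`{(ma, nb)}`. Because `gcd(x,y) = 1`, the Chinese remainder theorem makes this kernel cyclic,
generated by `(m,n)`. So it suffices to lift `(u,v)` to a coprime pair `(U,V)` of which `(m,n)` is
a multiple modulo `(xm,yn)`. With `g = gcd(u,m)` and `h = gcd(v,n)`, take `U = g p` and `V = h q`,
where `p` and `q` are large primes (Dirichlet) in the classes of `u/g` mod `m/g` and `v/h` mod
`n/h`; then `(m/g)(n/h) w` is the multiplier, for `w` inverting `(n/h) p` mod `x` and `(m/g) q`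
mod `y`.
-/

theorem Int.exists_modEq_and_modEq {x y : ℤ} (h : IsCoprime x y) (a b : ℤ) :
    ∃ r, r ≡ a [ZMOD x] ∧ r ≡ b [ZMOD y] := by
  obtain ⟨c, d, hcd⟩ := h
  refine ⟨a * (d * y) + b * (c * x), ?_, ?_⟩ <;> rw [Int.modEq_iff_dvd]
  · exact ⟨(a - b) * c, by linear_combination (-a) * hcd⟩
  · exact ⟨(b - a) * d, by linear_combination (-b) * hcd⟩

theorem Int.exists_mul_modEq_one_and_mul_modEq_one {a b x y : ℤ} (ha : IsCoprime a x)
    (hb : IsCoprime b y) (hxy : IsCoprime x y) :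
    ∃ w, w * a ≡ 1 [ZMOD x] ∧ w * b ≡ 1 [ZMOD y] := by
  obtain ⟨s, t, hst⟩ := ha
  obtain ⟨s', t', hst'⟩ := hb
  obtain ⟨w, hws, hws'⟩ := Int.exists_modEq_and_modEq hxy s s'
  exact ⟨w, (hws.mul_right a).trans (Int.modEq_iff_dvd.mpr ⟨t, by linear_combination -hst⟩),
    (hws'.mul_right b).trans (Int.modEq_iff_dvd.mpr ⟨t', by linear_combination -hst'⟩)⟩

theorem exists_isCoprime_gcd_mul_modEq (u : ℤ) {m : ℕ} (hm : m ≠ 0) {N : ℤ} (hN : N ≠ 0) :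
    ∃ c : ℤ, c ≠ 0 ∧ IsCoprime c N ∧ (Int.gcd u m : ℤ) * c ≡ u [ZMOD m] := by
  set g := Int.gcd u m
  have hg : 0 < g := Int.gcd_pos_of_ne_zero_right u (by exact_mod_cast hm)
  have hgu : (g : ℤ) * (u / g) = u := Int.mul_ediv_cancel' (Int.gcd_dvd_left _ _)
  have hgm : (g : ℤ) * ((m / g : ℕ) : ℤ) = m := by
    push_cast; exact Int.mul_ediv_cancel' (Int.gcd_dvd_right _ _)
  have hcop : IsCoprime (u / g) ((m / g : ℕ) : ℤ) := by
    push_cast; exact Int.isCoprime_iff_gcd_eq_one.mpr (Int.gcd_div_gcd_div_gcd hg)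
  obtain ⟨p, hpN, hp, hpu⟩ := Nat.forall_exists_prime_gt_and_zmodEq N.natAbs
    (fun h0 => hm (by simpa [h0] using hgm.symm)) hcop
  refine ⟨p, by exact_mod_cast hp.ne_zero, ?_, ?_⟩
  · exact Int.isCoprime_iff_gcd_eq_one.mpr
      (Nat.coprime_of_lt_prime (Int.natAbs_ne_zero.mpr hN) hpN hp)
  · simpa only [hgu, hgm] using hpu.mul_left' (c := (g : ℤ))

theorem exists_isCoprime_lift_with_mul_modEq {m n x y : ℕ} (hm : m ≠ 0) (hn : n ≠ 0)
    (hx : x ≠ 0) (hy : y ≠ 0) (hxy : IsCoprime (x : ℤ) y) (hmy : IsCoprime (m : ℤ) y)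
    (hnx : IsCoprime (n : ℤ) x) {u v : ℤ} (huv : IsCoprime u v) :
    ∃ U V k : ℤ, IsCoprime U V ∧ U ≡ u [ZMOD m] ∧ V ≡ v [ZMOD n] ∧
      k * U ≡ m [ZMOD (x * m : ℕ)] ∧ k * V ≡ n [ZMOD (y * n : ℕ)] := by
  set g : ℤ := (Int.gcd u m : ℤ)
  set h : ℤ := (Int.gcd v n : ℤ)
  obtain ⟨p, hp0, hp, hpu⟩ := exists_isCoprime_gcd_mul_modEq u hm (N := x * n) (by positivity)
  obtain ⟨q, -, hq, hqv⟩ := exists_isCoprime_gcd_mul_modEq v hn (N := y * m * p) (by positivity)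
  obtain ⟨m₁, hm₁⟩ : g ∣ m := Int.gcd_dvd_right _ _
  obtain ⟨n₁, hn₁⟩ : h ∣ n := Int.gcd_dvd_right _ _
  have hgh : IsCoprime g h :=
    (huv.of_isCoprime_of_dvd_left (Int.gcd_dvd_left _ _)).of_isCoprime_of_dvd_right
      (Int.gcd_dvd_left _ _)
  have hpx : IsCoprime p x := hp.of_mul_right_left
  have hpn : IsCoprime p n := hp.of_mul_right_right
  have hqy : IsCoprime q y := hq.of_mul_right_left.of_mul_right_left
  have hqm : IsCoprime q m := hq.of_mul_right_left.of_mul_right_right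
  have hqp : IsCoprime q p := hq.of_mul_right_right
  obtain ⟨w, hwx, hwy⟩ := Int.exists_mul_modEq_one_and_mul_modEq_one
    ((hnx.of_isCoprime_of_dvd_left (Dvd.intro_left h hn₁.symm)).mul_left hpx)
    ((hmy.of_isCoprime_of_dvd_left (Dvd.intro_left g hm₁.symm)).mul_left hqy) hxy
  refine ⟨g * p, h * q, m₁ * n₁ * w, ?_, hpu, hqv, ?_, ?_⟩
  · exact (hgh.mul_right (hqm.of_isCoprime_of_dvd_right ⟨m₁, hm₁⟩).symm).mul_left
      ((hpn.of_isCoprime_of_dvd_right ⟨n₁, hn₁⟩).mul_right hqp.symm)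
  · rw [Nat.cast_mul, mul_comm]
    calc m₁ * n₁ * w * (g * p) = m * (w * (n₁ * p)) := by rw [hm₁]; ring
      _ ≡ m * 1 [ZMOD m * x] := hwx.mul_left'
      _ = m := mul_one _
  · rw [Nat.cast_mul, mul_comm]
    calc m₁ * n₁ * w * (h * q) = n * (w * (m₁ * q)) := by rw [hn₁]; ring
      _ ≡ n * 1 [ZMOD n * y] := hwy.mul_left'
      _ = n := mul_one _

theorem AddMonoidHom.preimage_setOf_eq_add_zsmul {G H : Type*} [AddCommGroup G]
    [AddCommGroup H] (φ : G →+ H) {a d : G} (hker : φ.ker ≤ AddSubgroup.zmultiples d) :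
    φ ⁻¹' {Q | ∃ k : ℤ, Q = φ a + k • φ d} = {P | ∃ k : ℤ, P = a + k • d} := by
  ext P
  constructor
  · rintro ⟨k, hk⟩
    have hmem : P - (a + k • d) ∈ φ.ker := by simp [AddMonoidHom.mem_ker, hk]
    obtain ⟨j, hj⟩ := AddSubgroup.mem_zmultiples_iff.mp (hker hmem)
    exact ⟨k + j, by rw [add_zsmul, hj]; abel⟩
  · rintro ⟨k, rfl⟩
    exact ⟨k, by simp⟩

theorem setOf_torusLine_eq_add_zsmul {m n : ℕ} (A : ZMod m × ZMod n) (u v : ℤ) :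
    {P : ZMod m × ZMod n |
        ∃ k : ℤ, P = (A.1 + ((k * u : ℤ) : ZMod m), A.2 + ((k * v : ℤ) : ZMod n))}
      = {P | ∃ k : ℤ, P = A + k • ((u : ZMod m), (v : ZMod n))} := by
  simp only [Prod.ext_iff, Prod.fst_add, Prod.snd_add, Prod.smul_fst, Prod.smul_snd,
    Int.cast_mul, ← zsmul_eq_mul]

theorem ZMod.exists_eq_natCast_mul_of_castHom_eq_zero {d N : ℕ} (hdN : d ∣ N) {P : ZMod N}
    (hP : ZMod.castHom hdN (ZMod d) P = 0) : ∃ a : ℤ, P = d * a := by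
  obtain ⟨a, ha⟩ : (d : ℤ) ∣ P.cast := by
    rw [← ZMod.intCast_zmod_eq_zero_iff_dvd, ← hP, ← map_intCast (ZMod.castHom hdN (ZMod d)),
      ZMod.intCast_zmod_cast]
  exact ⟨a, by rw [← ZMod.intCast_zmod_cast P, ha]; push_cast; rfl⟩

theorem ZMod.natCast_mul_intCast_eq_of_modEq {m x : ℕ} {a b : ℤ} (h : a ≡ b [ZMOD x]) :
    (m : ZMod (x * m)) * a = m * b := by
  have := (ZMod.intCast_eq_intCast_iff (m * a) (m * b) (x * m)).mpr
    (by rw [Nat.cast_mul, mul_comm]; exact h.mul_left')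
  exact_mod_cast this

def torusReduction (x m y n : ℕ) : ZMod (x * m) × ZMod (y * n) →+ ZMod m × ZMod n :=
  ((ZMod.castHom (dvd_mul_left m x) (ZMod m)).prodMap
    (ZMod.castHom (dvd_mul_left n y) (ZMod n))).toAddMonoidHom

theorem ker_torusReduction_le_zmultiples {x m y n : ℕ} (hxy : IsCoprime (x : ℤ) y) :
    (torusReduction x m y n).ker ≤
      AddSubgroup.zmultiples ((m : ZMod (x * m)), (n : ZMod (y * n))) := by
  intro P hP
  obtain ⟨a, ha⟩ : ∃ a : ℤ, P.1 = m * a :=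
    ZMod.exists_eq_natCast_mul_of_castHom_eq_zero (dvd_mul_left m x) (congrArg Prod.fst hP)
  obtain ⟨b, hb⟩ : ∃ b : ℤ, P.2 = n * b :=
    ZMod.exists_eq_natCast_mul_of_castHom_eq_zero (dvd_mul_left n y) (congrArg Prod.snd hP)
  obtain ⟨r, hra, hrb⟩ := Int.exists_modEq_and_modEq hxy a b
  refine AddSubgroup.mem_zmultiples_iff.mpr ⟨r, Prod.ext ?_ ?_⟩
  · rw [Prod.smul_fst, zsmul_eq_mul, ha]
    exact (mul_comm _ _).trans (ZMod.natCast_mul_intCast_eq_of_modEq hra)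
  · rw [Prod.smul_snd, zsmul_eq_mul, hb]
    exact (mul_comm _ _).trans (ZMod.natCast_mul_intCast_eq_of_modEq hrb)

theorem torusReduction_surjective {x m y n : ℕ} :
    Function.Surjective (torusReduction x m y n) :=
  (ZMod.ringHom_surjective (ZMod.castHom (dvd_mul_left m x) (ZMod m))).prodMap
    (ZMod.ringHom_surjective (ZMod.castHom (dvd_mul_left n y) (ZMod n)))

theorem torusReduction_intCast {x m y n : ℕ} {U V u v : ℤ} (hU : U ≡ u [ZMOD m])
    (hV : V ≡ v [ZMOD n]) :
    torusReduction x m y n ((U : ZMod (x * m)), (V : ZMod (y * n))) =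
      ((u : ZMod m), (v : ZMod n)) :=
  Prod.ext ((map_intCast (ZMod.castHom (dvd_mul_left m x) (ZMod m)) U).trans
      ((ZMod.intCast_eq_intCast_iff _ _ _).mpr hU))
    ((map_intCast (ZMod.castHom (dvd_mul_left n y) (ZMod n)) V).trans
      ((ZMod.intCast_eq_intCast_iff _ _ _).mpr hV))

theorem natCast_mem_zmultiples_intCast {x m y n : ℕ} {U V k : ℤ}
    (hU : k * U ≡ m [ZMOD (x * m : ℕ)]) (hV : k * V ≡ n [ZMOD (y * n : ℕ)]) :
    ((m : ZMod (x * m)), (n : ZMod (y * n))) ∈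
      AddSubgroup.zmultiples ((U : ZMod (x * m)), (V : ZMod (y * n))) := by
  refine AddSubgroup.mem_zmultiples_iff.mpr ⟨k, Prod.ext ?_ ?_⟩
  · simpa using (ZMod.intCast_eq_intCast_iff _ _ _).mpr hU
  · simpa using (ZMod.intCast_eq_intCast_iff _ _ _).mpr hV

theorem stmt4 (m n x y : ℕ) (hm : 0 < m) (hn : 0 < n) (hx : 0 < x) (hy : 0 < y)
    (hxy : Nat.gcd x y = 1) (hmy : Nat.gcd m y = 1) (hnx : Nat.gcd n x = 1)
    (f : ZMod (x * m) × ZMod (y * n) → ZMod m × ZMod n)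
    (hf : f = fun P => (ZMod.castHom (dvd_mul_left m x) (ZMod m) P.1,
                        ZMod.castHom (dvd_mul_left n y) (ZMod n) P.2)) :
    ∀ L : Set (ZMod m × ZMod n), torusLine m n L →
      torusLine (x * m) (y * n) (f ⁻¹' L) := by
  rintro L ⟨A, u, v, huv, rfl⟩
  have hxy' := Nat.isCoprime_iff_coprime.mpr hxy
  obtain ⟨U, V, k, hUV, hUu, hVv, hkU, hkV⟩ :=
    exists_isCoprime_lift_with_mul_modEq hm.ne' hn.ne' hx.ne' hy.ne' hxy'
      (Nat.isCoprime_iff_coprime.mpr hmy) (Nat.isCoprime_iff_coprime.mpr hnx)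
      (Int.isCoprime_iff_gcd_eq_one.mpr huv)
  obtain ⟨A', rfl⟩ := torusReduction_surjective (x := x) (y := y) A
  refine ⟨A', U, V, Int.isCoprime_iff_gcd_eq_one.mp hUV, ?_⟩
  rw [setOf_torusLine_eq_add_zsmul, setOf_torusLine_eq_add_zsmul,
    ← torusReduction_intCast hUu hVv, hf]
  exact AddMonoidHom.preimage_setOf_eq_add_zsmul _ ((ker_torusReduction_le_zmultiples hxy').trans
    (AddSubgroup.zmultiples_le_of_mem (natCast_mem_zmultiples_intCast hkU hkV)))
end

section
/- Let m, n be positive integers such that for every prime p, p divides m if and only if p divides n (m and n have the same prime divisors). Let (a₁,a₂) be a point on T_{m,n} with gcd(a₁,a₂) = 1. Then there is exactly one line on T_{m,n} containing both the origin and (a₁,a₂). -/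
open scoped Pointwise

/-!
Write the line as `A + ℤ • w` with `w = (u, v)`. Passing through the origin, it is the cyclic
subgroup `ℤ • w`, so `a = (a₁, a₂) = c • w` for some `c ∈ ℤ`. A prime dividing `c` and `m` also
divides `n`, hence divides both `a₁ ≡ c u (mod m)` and `a₂ ≡ c v (mod n)`, contradicting
`gcd(a₁, a₂) = 1`. So `c` is invertible modulo `m n`, which annihilates the torus, and `a` generates
the same subgroup as `w`: every such line is `ℤ • a`.
-/

theorem isCoprime_of_dvd_sub_mul {m n : ℕ} (hmn : ∀ p : ℕ, p.Prime → p ∣ m → p ∣ n)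
    {a₁ a₂ c u v : ℤ} (ha : IsCoprime a₁ a₂) (h₁ : (m : ℤ) ∣ a₁ - c * u)
    (h₂ : (n : ℤ) ∣ a₂ - c * v) : IsCoprime c m := by
  rw [Int.isCoprime_iff_gcd_eq_one]
  refine Nat.coprime_of_dvd fun p hp hpc hpm => ?_
  have hpc : (p : ℤ) ∣ c := Int.natCast_dvd.mpr hpc
  have hpm : (p : ℤ) ∣ m := Int.natCast_dvd_natCast.mpr hpm
  have hpn : (p : ℤ) ∣ n := Int.natCast_dvd_natCast.mpr (hmn p hp (Int.natCast_dvd_natCast.mp hpm))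
  have hpa₁ : (p : ℤ) ∣ a₁ := (dvd_sub_left (hpc.mul_right u)).mp (hpm.trans h₁)
  have hpa₂ : (p : ℤ) ∣ a₂ := (dvd_sub_left (hpc.mul_right v)).mp (hpn.trans h₂)
  exact (Nat.prime_iff_prime_int.mp hp).not_isUnit (ha.isUnit_of_dvd' hpa₁ hpa₂)

theorem AddSubgroup.zmultiples_zsmul_eq_of_isCoprime {G : Type*} [AddCommGroup G] {w : G}
    {c N : ℤ} (hc : IsCoprime c N) (hN : N • w = 0) :
    AddSubgroup.zmultiples (c • w) = AddSubgroup.zmultiples w := by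
  obtain ⟨x, y, hxy⟩ := hc
  refine le_antisymm (AddSubgroup.zmultiples_le_of_mem (AddSubgroup.zsmul_mem_zmultiples w c))
    (AddSubgroup.zmultiples_le_of_mem ⟨x, ?_⟩)
  calc x • c • w = (x * c + y * N) • w := by
        rw [add_zsmul, mul_zsmul, mul_zsmul, hN, smul_zero, add_zero]
    _ = w := by rw [hxy, one_zsmul]

theorem AddSubgroup.vadd_coe_eq_of_zero_mem {G : Type*} [AddGroup G] (H : AddSubgroup G) {A : G}
    (h0 : (0 : G) ∈ A +ᵥ (H : Set G)) : A +ᵥ (H : Set G) = H := by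
  rw [Set.mem_vadd_set_iff_neg_vadd_mem, vadd_eq_add, add_zero, SetLike.mem_coe, neg_mem_iff] at h0
  exact leftAddCoset_mem_leftAddCoset H h0

theorem ZMod.prod_zsmul_eq_zero {m n : ℕ} (P : ZMod m × ZMod n) : ((m * n : ℕ) : ℤ) • P = 0 := by
  ext <;> simp [zsmul_eq_mul]

theorem torusLine_iff {m n : ℕ} {L : Set (ZMod m × ZMod n)} :
    torusLine m n L ↔ ∃ (A : ZMod m × ZMod n) (u v : ℤ), Int.gcd u v = 1 ∧
      L = A +ᵥ (AddSubgroup.zmultiples ((u : ZMod m), (v : ZMod n)) : Set (ZMod m × ZMod n)) := by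
  have hset (A : ZMod m × ZMod n) (u v : ℤ) :
      {P | ∃ k : ℤ, P = (A.1 + ((k * u : ℤ) : ZMod m), A.2 + ((k * v : ℤ) : ZMod n))} =
        A +ᵥ (AddSubgroup.zmultiples ((u : ZMod m), (v : ZMod n)) : Set (ZMod m × ZMod n)) := by
    ext P
    rw [Set.mem_vadd_set_iff_neg_vadd_mem, SetLike.mem_coe, AddSubgroup.mem_zmultiples_iff,
      Set.mem_ofPred_eq]
    refine exists_congr fun k => ?_
    rw [vadd_eq_add, eq_neg_add_iff_add_eq, eq_comm, Prod.smul_mk, Prod.mk_add_mk]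
    simp [zsmul_eq_mul]
  simp only [torusLine, hset]

theorem torusLine_eq_zmultiples {m n : ℕ} (hpr : ∀ p : ℕ, p.Prime → (p ∣ m ↔ p ∣ n))
    {a₁ a₂ : ℤ} (ha : Int.gcd a₁ a₂ = 1) {L : Set (ZMod m × ZMod n)} (hL : torusLine m n L)
    (h0 : (0 : ZMod m × ZMod n) ∈ L) (ha' : ((a₁ : ZMod m), (a₂ : ZMod n)) ∈ L) :
    L = AddSubgroup.zmultiples ((a₁ : ZMod m), (a₂ : ZMod n)) := by
  obtain ⟨A, u, v, -, rfl⟩ := torusLine_iff.mp hL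
  set w : ZMod m × ZMod n := ((u : ZMod m), (v : ZMod n))
  rw [AddSubgroup.vadd_coe_eq_of_zero_mem _ h0] at ha' ⊢
  obtain ⟨c, hc⟩ := AddSubgroup.mem_zmultiples_iff.mp ha'
  obtain ⟨hc₁, hc₂⟩ := Prod.ext_iff.mp hc
  simp only [w, Prod.smul_mk, zsmul_eq_mul, ← Int.cast_mul] at hc₁ hc₂
  have h₁ := (ZMod.intCast_eq_intCast_iff_dvd_sub _ _ _).mp hc₁
  have h₂ := (ZMod.intCast_eq_intCast_iff_dvd_sub _ _ _).mp hc₂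
  have ha := Int.isCoprime_iff_gcd_eq_one.mpr ha
  have hcop : IsCoprime c ((m * n : ℕ) : ℤ) := by
    rw [Nat.cast_mul]
    exact (isCoprime_of_dvd_sub_mul (fun p hp => (hpr p hp).mp) ha h₁ h₂).mul_right
      (isCoprime_of_dvd_sub_mul (fun p hp => (hpr p hp).mpr) ha.symm h₂ h₁)
  rw [← hc, AddSubgroup.zmultiples_zsmul_eq_of_isCoprime hcop (ZMod.prod_zsmul_eq_zero w)]

theorem stmt12_general (m n : ℕ)
    (hpr : ∀ p : ℕ, p.Prime → (p ∣ m ↔ p ∣ n))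
    (a₁ a₂ : ℤ) (ha : Int.gcd a₁ a₂ = 1) :
    ∃! L : Set (ZMod m × ZMod n), torusLine m n L ∧
      (0 : ZMod m × ZMod n) ∈ L ∧ ((a₁ : ZMod m), (a₂ : ZMod n)) ∈ L := by
  refine ⟨AddSubgroup.zmultiples ((a₁ : ZMod m), (a₂ : ZMod n)), ⟨?_, ?_, ?_⟩, ?_⟩
  · exact torusLine_iff.mpr ⟨0, a₁, a₂, ha, (zero_vadd _ _).symm⟩
  · exact zero_mem _
  · exact AddSubgroup.mem_zmultiples _
  · rintro L ⟨hL, h0, ha'⟩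
    exact torusLine_eq_zmultiples hpr ha hL h0 ha'

theorem stmt12 (m n : ℕ) (hm : 0 < m) (hn : 0 < n)
    (hpr : ∀ p : ℕ, p.Prime → (p ∣ m ↔ p ∣ n))
    (a₁ a₂ : ℤ) (ha : Int.gcd a₁ a₂ = 1) :
    ∃! L : Set (ZMod m × ZMod n), torusLine m n L ∧
      (0 : ZMod m × ZMod n) ∈ L ∧ ((a₁ : ZMod m), (a₂ : ZMod n)) ∈ L :=
  stmt12_general m n hpr a₁ a₂ ha
end

section
/- Let p be prime, a ≤ b positive integers, and (x,y) a point on T_{p^a,p^b} such that p does not divide x or p does not divide y. Then there is exactly one line on T_{p^a,p^b} containing both the origin and (x,y). -/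
/-! A line through the origin is the cyclic subgroup `ℤ • w` generated by its direction. If
`(x, y) = t • w` lies on it, then `p ∤ t` (otherwise `p` would divide both `x` and `y`), so `t` is
invertible modulo `p ^ (a + b)`, which kills the whole torus, and `(x, y)` generates the same
subgroup as `w`. Hence every line through `0` and `(x, y)` is `ℤ • (x, y)`; one exists, with the
primitive direction `(x, y) / gcd(x, y)`. -/

open AddSubgroup

lemma zmultiples_zsmul_eq_of_isCoprime {G : Type*} [AddCommGroup G] {w : G} {n t : ℤ}
    (hn : n • w = 0) (hnt : IsCoprime n t) : zmultiples (t • w) = zmultiples w := by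
  refine le_antisymm (zmultiples_le_of_mem (zsmul_mem_zmultiples w t)) ?_
  obtain ⟨c, d, hcd⟩ := hnt
  have hw : d • t • w = w := calc
    d • t • w = (c * n + d * t) • w := by
      rw [add_zsmul, mul_zsmul, hn, smul_zero, zero_add, mul_zsmul]
    _ = w := by rw [hcd, one_zsmul]
  rw [zmultiples_le]
  simpa only [hw] using zsmul_mem_zmultiples (t • w) d

lemma ZMod.zsmul_eq_zero_of_dvd {m : ℕ} {k : ℤ} (hm : (m : ℤ) ∣ k) (z : ZMod m) :
    k • z = 0 := by
  rw [zsmul_eq_mul, (ZMod.intCast_zmod_eq_zero_iff_dvd k m).mpr hm, zero_mul]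

lemma dvd_of_intCast_eq_zsmul {p m : ℕ} (hpm : p ∣ m) {x t : ℤ} (ht : (p : ℤ) ∣ t)
    {z : ZMod m} (h : (x : ZMod m) = t • z) : (p : ℤ) ∣ x := by
  have h' := congrArg (ZMod.castHom hpm (ZMod p)) h
  rw [map_intCast, map_zsmul, zsmul_eq_mul, (ZMod.intCast_zmod_eq_zero_iff_dvd t p).mpr ht,
    zero_mul] at h'
  exact (ZMod.intCast_zmod_eq_zero_iff_dvd x p).mp h'

lemma torusLine_set_eq (m n : ℕ) (A : ZMod m × ZMod n) (u v : ℤ) :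
    {P | ∃ k : ℤ, P = (A.1 + ((k * u : ℤ) : ZMod m), A.2 + ((k * v : ℤ) : ZMod n))} =
      {P | ∃ k : ℤ, P = A + k • ((u : ZMod m), (v : ZMod n))} := by
  simp only [Int.cast_mul, ← zsmul_eq_mul, Prod.smul_mk]
  rfl

lemma torusLine_zmultiples {m n : ℕ} {u v : ℤ} (huv : Int.gcd u v = 1) :
    torusLine m n (zmultiples ((u : ZMod m), (v : ZMod n))) := by
  refine ⟨0, u, v, huv, ?_⟩
  rw [torusLine_set_eq]
  ext P
  simp [mem_zmultiples_iff, eq_comm]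

lemma torusLine_eq_zmultiples_s13 {m n : ℕ} {L : Set (ZMod m × ZMod n)} (hL : torusLine m n L)
    (h0 : 0 ∈ L) : ∃ u v : ℤ, L = zmultiples ((u : ZMod m), (v : ZMod n)) := by
  obtain ⟨A, u, v, -, rfl⟩ := hL
  rw [torusLine_set_eq] at h0 ⊢
  obtain ⟨k₀, hk₀⟩ := h0
  rw [eq_neg_of_add_eq_zero_left hk₀.symm]
  refine ⟨u, v, Set.ext fun P => ?_⟩
  simp only [Set.mem_ofPred_eq, SetLike.mem_coe, mem_zmultiples_iff]
  constructor
  · rintro ⟨k, rfl⟩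
    exact ⟨k - k₀, by rw [sub_zsmul]; abel⟩
  · rintro ⟨k, rfl⟩
    exact ⟨k + k₀, by rw [add_zsmul]; abel⟩

lemma exists_torusLine_zero_mem_mem (m n : ℕ) (x y : ℤ) :
    ∃ L, torusLine m n L ∧ 0 ∈ L ∧ ((x : ZMod m), (y : ZMod n)) ∈ L := by
  by_cases hg : Int.gcd x y = 0
  · obtain ⟨rfl, rfl⟩ := Int.gcd_eq_zero_iff.mp hg
    refine ⟨_, torusLine_zmultiples (Int.gcd_one_left 0), zero_mem _, ?_⟩
    simp only [Int.cast_zero, Prod.mk_zero_zero]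
    exact zero_mem _
  refine ⟨_, torusLine_zmultiples (Int.gcd_div_gcd_div_gcd (Nat.pos_of_ne_zero hg)),
    zero_mem _, ⟨Int.gcd x y, ?_⟩⟩
  simp only [Prod.smul_mk, zsmul_eq_mul, ← Int.cast_mul]
  rw [Int.mul_ediv_cancel' (Int.gcd_dvd_left x y), Int.mul_ediv_cancel' (Int.gcd_dvd_right x y)]

lemma torusLine_eq_zmultiples_of_not_dvd {p a b : ℕ} (hp : p.Prime) (ha : 0 < a) (hb : 0 < b)
    {x y : ℤ} (hxy : ¬ (p : ℤ) ∣ x ∨ ¬ (p : ℤ) ∣ y) {L : Set (ZMod (p ^ a) × ZMod (p ^ b))}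
    (hL : torusLine (p ^ a) (p ^ b) L) (h0 : 0 ∈ L)
    (hP : ((x : ZMod (p ^ a)), (y : ZMod (p ^ b))) ∈ L) :
    L = zmultiples ((x : ZMod (p ^ a)), (y : ZMod (p ^ b))) := by
  obtain ⟨u, v, rfl⟩ := torusLine_eq_zmultiples_s13 hL h0
  obtain ⟨t, ht⟩ := mem_zmultiples_iff.mp hP
  have hpt : ¬ (p : ℤ) ∣ t := fun hpt => hxy.elim
    (· (dvd_of_intCast_eq_zsmul (dvd_pow_self p ha.ne') hpt (congrArg Prod.fst ht.symm)))
    (· (dvd_of_intCast_eq_zsmul (dvd_pow_self p hb.ne') hpt (congrArg Prod.snd ht.symm)))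
  have hcop : IsCoprime ((p : ℤ) ^ (a + b)) t :=
    ((Prime.coprime_iff_not_dvd (Nat.prime_iff_prime_int.mp hp)).mpr hpt).pow_left
  have hann : (p : ℤ) ^ (a + b) • ((u : ZMod (p ^ a)), (v : ZMod (p ^ b))) = 0 := by
    refine Prod.ext (ZMod.zsmul_eq_zero_of_dvd ?_ _) (ZMod.zsmul_eq_zero_of_dvd ?_ _) <;> push_cast
    exacts [pow_dvd_pow _ (Nat.le_add_right a b), pow_dvd_pow _ (Nat.le_add_left b a)]
  rw [← ht, zmultiples_zsmul_eq_of_isCoprime hann hcop]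

theorem stmt13 (p a b : ℕ) (hp : p.Prime) (ha : 0 < a) (hab : a ≤ b)
    (x y : ℤ) (hxy : ¬ (p : ℤ) ∣ x ∨ ¬ (p : ℤ) ∣ y) :
    ∃! L : Set (ZMod (p ^ a) × ZMod (p ^ b)), torusLine (p ^ a) (p ^ b) L ∧
      (0 : ZMod (p ^ a) × ZMod (p ^ b)) ∈ L ∧ ((x : ZMod (p ^ a)), (y : ZMod (p ^ b))) ∈ L := by
  have hb : 0 < b := ha.trans_le hab
  obtain ⟨L, hL, h0, hP⟩ := exists_torusLine_zero_mem_mem (p ^ a) (p ^ b) x y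
  refine ⟨L, ⟨hL, h0, hP⟩, fun L' ⟨hL', h0', hP'⟩ => ?_⟩
  rw [torusLine_eq_zmultiples_of_not_dvd hp ha hb hxy hL' h0' hP',
    torusLine_eq_zmultiples_of_not_dvd hp ha hb hxy hL h0 hP]
end

section
/- Let p be prime, a ≤ b, and (v₁p^c, v₂p^d) a point on T_{p^a,p^b} where p divides neither v₁ nor v₂, c < a, d < b, and c ≤ d. Then every line on T_{p^a,p^b} containing the origin and (v₁p^c, v₂p^d) also contains a point (w₁,w₂) with w₁ ≡ v₁ (mod p^{a−c}) and w₂ ≡ v₂p^{d−c} (mod p^{b−c}). -/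
def originLine (m n : ℕ) (u v : ℤ) : Set (ZMod m × ZMod n) :=
  {P | ∃ k : ℤ, P = (((k * u : ℤ) : ZMod m), ((k * v : ℤ) : ZMod n))}

theorem torusLine.exists_eq_originLine {m n : ℕ} {L : Set (ZMod m × ZMod n)}
    (hL : torusLine m n L) (h0 : 0 ∈ L) :
    ∃ u v : ℤ, Int.gcd u v = 1 ∧ L = originLine m n u v := by
  obtain ⟨A, u, v, huv, rfl⟩ := hL
  obtain ⟨k₀, hk₀⟩ := h0
  have hA : A = (-((k₀ * u : ℤ) : ZMod m), -((k₀ * v : ℤ) : ZMod n)) := by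
    rw [Prod.ext_iff] at hk₀ ⊢
    exact ⟨eq_neg_of_add_eq_zero_left hk₀.1.symm, eq_neg_of_add_eq_zero_left hk₀.2.symm⟩
  refine ⟨u, v, huv, Set.ext fun P => ⟨?_, ?_⟩⟩
  · rintro ⟨k, rfl⟩
    exact ⟨k - k₀, by rw [hA, Prod.ext_iff]; constructor <;> (push_cast; ring)⟩
  · rintro ⟨k, rfl⟩
    exact ⟨k + k₀, by rw [hA, Prod.ext_iff]; constructor <;> (push_cast; ring)⟩

theorem intCast_mem_originLine_iff {m n : ℕ} {u v x y : ℤ} :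
    ((x : ZMod m), (y : ZMod n)) ∈ originLine m n u v ↔
      ∃ k : ℤ, x ≡ k * u [ZMOD m] ∧ y ≡ k * v [ZMOD n] := by
  simp only [originLine, Set.mem_ofPred_eq, Prod.ext_iff, ZMod.intCast_eq_intCast_iff]

theorem Int.dvd_of_dvd_mul_of_gcd_eq_one {g t u v : ℤ} (hu : g ∣ t * u) (hv : g ∣ t * v)
    (huv : Int.gcd u v = 1) : g ∣ t := by
  have h := Int.dvd_coe_gcd hu hv
  rwa [Int.gcd_mul_left, huv, mul_one, Int.natCast_natAbs, dvd_abs] at h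

theorem Int.exists_modEq_of_mul_modEq {g m n t u v x y : ℤ} (hg : g ≠ 0)
    (huv : Int.gcd u v = 1) (hx : g * x ≡ t * u [ZMOD g * m])
    (hy : g * y ≡ t * v [ZMOD g * n]) :
    ∃ s : ℤ, x ≡ s * u [ZMOD m] ∧ y ≡ s * v [ZMOD n] := by
  have hgu : g ∣ t * u := (dvd_sub_left (dvd_mul_right g x)).mp (hx.of_mul_right m).dvd
  have hgv : g ∣ t * v := (dvd_sub_left (dvd_mul_right g y)).mp (hy.of_mul_right n).dvd
  obtain ⟨s, rfl⟩ := Int.dvd_of_dvd_mul_of_gcd_eq_one hgu hgv huv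
  rw [mul_assoc] at hx hy
  exact ⟨s, Int.ModEq.mul_left_cancel' hg hx, Int.ModEq.mul_left_cancel' hg hy⟩

theorem stmt16_general (p a b c d : ℕ) (hp : p.Prime)
    (hc : c < a) (hd : d < b) (hcd : c ≤ d)
    (v₁ v₂ : ℤ) :
    ∀ L : Set (ZMod (p ^ a) × ZMod (p ^ b)), torusLine (p ^ a) (p ^ b) L →
      (0 : ZMod (p ^ a) × ZMod (p ^ b)) ∈ L →
      (((v₁ * p ^ c : ℤ) : ZMod (p ^ a)), ((v₂ * p ^ d : ℤ) : ZMod (p ^ b))) ∈ L →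
      ∃ w₁ w₂ : ℤ, ((w₁ : ZMod (p ^ a)), (w₂ : ZMod (p ^ b))) ∈ L ∧
        w₁ ≡ v₁ [ZMOD ((p : ℤ) ^ (a - c))] ∧
        w₂ ≡ v₂ * (p : ℤ) ^ (d - c) [ZMOD ((p : ℤ) ^ (b - c))] := by
  intro L hL h0 hP
  obtain ⟨u, v, huv, rfl⟩ := hL.exists_eq_originLine h0
  obtain ⟨k, hk₁, hk₂⟩ := intCast_mem_originLine_iff.mp hP
  have hsplit : ∀ e, c ≤ e → (p : ℤ) ^ e = p ^ c * p ^ (e - c) := fun e he => by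
    rw [← pow_add, Nat.add_sub_cancel' he]
  push_cast at hk₁ hk₂
  rw [hsplit a hc.le, mul_comm v₁] at hk₁
  rw [hsplit b (hcd.trans hd.le), hsplit d hcd, mul_left_comm] at hk₂
  obtain ⟨s, hs₁, hs₂⟩ :=
    Int.exists_modEq_of_mul_modEq (pow_ne_zero c (mod_cast hp.ne_zero)) huv hk₁ hk₂
  exact ⟨s * u, s * v, ⟨s, rfl⟩, hs₁.symm, hs₂.symm⟩

theorem stmt16 (p a b c d : ℕ) (hp : p.Prime) (hab : a ≤ b)
    (hc : c < a) (hd : d < b) (hcd : c ≤ d)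
    (v₁ v₂ : ℤ) (hv₁ : ¬ (p : ℤ) ∣ v₁) (hv₂ : ¬ (p : ℤ) ∣ v₂) :
    ∀ L : Set (ZMod (p ^ a) × ZMod (p ^ b)), torusLine (p ^ a) (p ^ b) L →
      (0 : ZMod (p ^ a) × ZMod (p ^ b)) ∈ L →
      (((v₁ * p ^ c : ℤ) : ZMod (p ^ a)), ((v₂ * p ^ d : ℤ) : ZMod (p ^ b))) ∈ L →
      ∃ w₁ w₂ : ℤ, ((w₁ : ZMod (p ^ a)), (w₂ : ZMod (p ^ b))) ∈ L ∧
        w₁ ≡ v₁ [ZMOD ((p : ℤ) ^ (a - c))] ∧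
        w₂ ≡ v₂ * (p : ℤ) ^ (d - c) [ZMOD ((p : ℤ) ^ (b - c))] :=
  stmt16_general p a b c d hp hc hd hcd v₁ v₂
end

section
/- Let m, n be positive integers and A=(a₁,a₂), B=(b₁,b₂), C=(c₁,c₂) points on T_{m,n}. If A, B, C are collinear on T_{m,n}, then the determinant det[[a₁,b₁,c₁],[a₂,b₂,c₂],[1,1,1]] is congruent to 0 modulo gcd(m,n). -/
theorem stmt17 (m n : ℕ) (hm : 0 < m) (hn : 0 < n)
    (a₁ a₂ b₁ b₂ c₁ c₂ : ℤ)
    (hcol : torusCollinear m n ((a₁ : ZMod m), (a₂ : ZMod n))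
      ((b₁ : ZMod m), (b₂ : ZMod n)) ((c₁ : ZMod m), (c₂ : ZMod n))) :
    ((Nat.gcd m n : ℤ)) ∣
      (a₁ * b₂ + b₁ * c₂ + c₁ * a₂ - c₁ * b₂ - a₁ * c₂ - b₁ * a₂) := by
  obtain ⟨L, ⟨A, u, v, hguv, rfl⟩, hP, hQ, hR⟩ := hcol
  obtain ⟨ka, hka⟩ := hP
  obtain ⟨kb, hkb⟩ := hQ
  obtain ⟨kc, hkc⟩ := hR
  set d := Nat.gcd m n with hd
  have hdm : d ∣ m := Nat.gcd_dvd_left m n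
  have hdn : d ∣ n := Nat.gcd_dvd_right m n
  rw [← ZMod.intCast_zmod_eq_zero_iff_dvd]
  have h1 := congrArg (ZMod.castHom hdm (ZMod d)) (congrArg Prod.fst hka)
  have h2 := congrArg (ZMod.castHom hdn (ZMod d)) (congrArg Prod.snd hka)
  have h3 := congrArg (ZMod.castHom hdm (ZMod d)) (congrArg Prod.fst hkb)
  have h4 := congrArg (ZMod.castHom hdn (ZMod d)) (congrArg Prod.snd hkb)
  have h5 := congrArg (ZMod.castHom hdm (ZMod d)) (congrArg Prod.fst hkc)
  have h6 := congrArg (ZMod.castHom hdn (ZMod d)) (congrArg Prod.snd hkc)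
  simp only [map_add, map_intCast] at h1 h2 h3 h4 h5 h6
  push_cast at h1 h2 h3 h4 h5 h6 ⊢
  rw [h1, h2, h3, h4, h5, h6]
  ring
end

section
/- Let m, n be positive integers and A, B, C points on T_{m,n}. Then A, B, C are NOT collinear on T_{m,n} if and only if for all integers α₁,α₂,β₁,β₂,γ₁,γ₂, the determinant det[[a₁+α₁m, b₁+β₁m, c₁+γ₁m],[a₂+α₂n, b₂+β₂n, c₂+γ₂n],[1,1,1]] is nonzero. Equivalently, A,B,C are collinear on T_{m,n} iff some choice of integer lifts of A,B,C is collinear in ℤ². -/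
/-!
A torus line through `π x` with primitive direction `(u, v)` is the image of the integer line
`x + ℤ (u, v)`, so torus-collinear points have collinear integer lifts. Conversely, if `x, y, z ∈ ℤ²`
are collinear then `y - x` and `z - x` are multiples of one primitive vector (divide one of them by
the gcd of its coordinates; Bézout makes the other a multiple as well), so their images lie on a
torus line. Two lifts of a point differ by `(α m, β n)`.
-/

namespace Int

theorem exists_gcd_eq_one_mul_eq (p q : ℤ) :
    ∃ u v k : ℤ, u.gcd v = 1 ∧ p = k * u ∧ q = k * v := by
  rcases Nat.eq_zero_or_pos (p.gcd q) with h | h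
  · obtain ⟨rfl, rfl⟩ := Int.gcd_eq_zero_iff.mp h
    exact ⟨1, 0, 0, rfl, by simp, by simp⟩
  · obtain ⟨u, v, hg, hp, hq⟩ := Int.exists_gcd_one h
    exact ⟨u, v, p.gcd q, hg, hp.trans (mul_comm _ _), hq.trans (mul_comm _ _)⟩

theorem exists_mul_eq_of_gcd_eq_one {u v r s : ℤ} (h : u.gcd v = 1) (hp : u * s = v * r) :
    ∃ k : ℤ, r = k * u ∧ s = k * v := by
  have bezout : (1 : ℤ) = u * u.gcdA v + v * u.gcdB v := by
    rw [← Int.gcd_eq_gcd_ab, h, Nat.cast_one]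
  refine ⟨r * u.gcdA v + s * u.gcdB v, ?_, ?_⟩
  · linear_combination r * bezout - u.gcdB v * hp
  · linear_combination s * bezout + u.gcdA v * hp

theorem exists_gcd_eq_one_of_mul_eq_mul {p q r s : ℤ} (h : p * s = q * r) :
    ∃ u v k l : ℤ, u.gcd v = 1 ∧ p = k * u ∧ q = k * v ∧ r = l * u ∧ s = l * v := by
  by_cases hpq : p = 0 ∧ q = 0
  · obtain ⟨u, v, l, hg, hr, hs⟩ := exists_gcd_eq_one_mul_eq r s
    exact ⟨u, v, 0, l, hg, by simp [hpq.1], by simp [hpq.2], hr, hs⟩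
  · obtain ⟨u, v, k, hg, hp, hq⟩ := exists_gcd_eq_one_mul_eq p q
    have hk : k ≠ 0 := by
      rintro rfl
      exact hpq ⟨by simpa using hp, by simpa using hq⟩
    have hpar : u * s = v * r := by
      apply mul_left_cancel₀ hk
      linear_combination h - s * hp + r * hq
    obtain ⟨l, hr, hs⟩ := exists_mul_eq_of_gcd_eq_one hg hpar
    exact ⟨u, v, k, l, hg, hp, hq, hr, hs⟩

end Int

/-- The projection `π_{m,n}` of `ℤ²` onto the torus. -/
def toTorus (m n : ℕ) (x : ℤ × ℤ) : ZMod m × ZMod n := ((x.1 : ZMod m), (x.2 : ZMod n))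

/-- `det [[x₁, y₁, z₁], [x₂, y₂, z₂], [1, 1, 1]] = 0`. -/
def IntCollinear (x y z : ℤ × ℤ) : Prop :=
  x.1 * y.2 + y.1 * z.2 + z.1 * x.2 - z.1 * y.2 - x.1 * z.2 - y.1 * x.2 = 0

section Torus

variable {m n : ℕ}

theorem toTorus_eq_toTorus_iff {x y : ℤ × ℤ} :
    toTorus m n x = toTorus m n y ↔ ∃ α β : ℤ, y = (x.1 + α * m, x.2 + β * n) := by
  simp only [toTorus, Prod.ext_iff, ZMod.intCast_eq_intCast_iff_dvd_sub, dvd_iff_exists_eq_mul_left,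
    sub_eq_iff_eq_add']
  constructor
  · rintro ⟨⟨α, hα⟩, ⟨β, hβ⟩⟩
    exact ⟨α, β, hα, hβ⟩
  · rintro ⟨α, β, hα, hβ⟩
    exact ⟨⟨α, hα⟩, ⟨β, hβ⟩⟩

theorem IntCollinear.torusCollinear {x y z : ℤ × ℤ} (h : IntCollinear x y z) :
    torusCollinear m n (toTorus m n x) (toTorus m n y) (toTorus m n z) := by
  obtain ⟨u, v, k, l, hg, hy₁, hy₂, hz₁, hz₂⟩ := Int.exists_gcd_eq_one_of_mul_eq_mul
    (show (y.1 - x.1) * (z.2 - x.2) = (y.2 - x.2) * (z.1 - x.1) by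
      unfold IntCollinear at h; linear_combination h)
  refine ⟨_, ⟨toTorus m n x, u, v, hg, rfl⟩, ⟨0, ?_⟩, ⟨k, ?_⟩, ⟨l, ?_⟩⟩ <;>
    simp only [toTorus, Prod.ext_iff, ← Int.cast_add] <;>
    constructor <;> congr 1 <;> linarith

theorem exists_intCollinear_of_torusCollinear {P Q R : ZMod m × ZMod n}
    (h : torusCollinear m n P Q R) :
    ∃ x y z : ℤ × ℤ, P = toTorus m n x ∧ Q = toTorus m n y ∧ R = toTorus m n z ∧
      IntCollinear x y z := by
  obtain ⟨L, ⟨⟨A₁, A₂⟩, u, v, -, rfl⟩, ⟨kP, rfl⟩, ⟨kQ, rfl⟩, ⟨kR, rfl⟩⟩ := h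
  obtain ⟨a₁, rfl⟩ := ZMod.intCast_surjective A₁
  obtain ⟨a₂, rfl⟩ := ZMod.intCast_surjective A₂
  refine ⟨(a₁ + kP * u, a₂ + kP * v), (a₁ + kQ * u, a₂ + kQ * v), (a₁ + kR * u, a₂ + kR * v),
    ?_, ?_, ?_, ?_⟩ <;> simp only [toTorus, IntCollinear, Int.cast_add]
  ring

theorem torusCollinear_iff_exists_intCollinear {x y z : ℤ × ℤ} :
    torusCollinear m n (toTorus m n x) (toTorus m n y) (toTorus m n z) ↔
      ∃ x' y' z' : ℤ × ℤ, toTorus m n x = toTorus m n x' ∧ toTorus m n y = toTorus m n y' ∧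
        toTorus m n z = toTorus m n z' ∧ IntCollinear x' y' z' := by
  constructor
  · exact exists_intCollinear_of_torusCollinear
  · rintro ⟨x', y', z', hx, hy, hz, h⟩
    rw [hx, hy, hz]
    exact h.torusCollinear

end Torus

theorem stmt18_general (m n : ℕ)
    (a₁ a₂ b₁ b₂ c₁ c₂ : ℤ) :
    ¬ torusCollinear m n ((a₁ : ZMod m), (a₂ : ZMod n))
        ((b₁ : ZMod m), (b₂ : ZMod n)) ((c₁ : ZMod m), (c₂ : ZMod n)) ↔
      ∀ α₁ α₂ β₁ β₂ γ₁ γ₂ : ℤ,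
        (a₁ + α₁ * m) * (b₂ + β₂ * n) + (b₁ + β₁ * m) * (c₂ + γ₂ * n)
          + (c₁ + γ₁ * m) * (a₂ + α₂ * n) - (c₁ + γ₁ * m) * (b₂ + β₂ * n)
          - (a₁ + α₁ * m) * (c₂ + γ₂ * n) - (b₁ + β₁ * m) * (a₂ + α₂ * n) ≠ 0 := by
  show ¬ torusCollinear m n (toTorus m n (a₁, a₂)) (toTorus m n (b₁, b₂)) (toTorus m n (c₁, c₂)) ↔ _
  simp only [torusCollinear_iff_exists_intCollinear, toTorus_eq_toTorus_iff]
  simp [IntCollinear]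

theorem stmt18 (m n : ℕ) (hm : 0 < m) (hn : 0 < n)
    (a₁ a₂ b₁ b₂ c₁ c₂ : ℤ) :
    ¬ torusCollinear m n ((a₁ : ZMod m), (a₂ : ZMod n))
        ((b₁ : ZMod m), (b₂ : ZMod n)) ((c₁ : ZMod m), (c₂ : ZMod n)) ↔
      ∀ α₁ α₂ β₁ β₂ γ₁ γ₂ : ℤ,
        (a₁ + α₁ * m) * (b₂ + β₂ * n) + (b₁ + β₁ * m) * (c₂ + γ₂ * n)
          + (c₁ + γ₁ * m) * (a₂ + α₂ * n) - (c₁ + γ₁ * m) * (b₂ + β₂ * n)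
          - (a₁ + α₁ * m) * (c₂ + γ₂ * n) - (b₁ + β₁ * m) * (a₂ + α₂ * n) ≠ 0 :=
  stmt18_general m n a₁ a₂ b₁ b₂ c₁ c₂
end
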